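/- arXiv:1801.04103 — 4 statements merged into one kernel-verified Lean document; each statement's English description precedes it below -/
import Mathlib

section
/- Let S_1,…,S_m⊆[n] be pairwise disjoint sets of equal size w, and let f:{-1,1}^m→{-1,1} be ρ^w-SP. Then the composed function h(x)=f(x^{S_1},…,x^{S_m}), where x^{S}=∏_{i∈S}x_i, is ρ-SP. -/
/-- Map a Boolean bit to ±1 ∈ ℝ (true ↦ 1, false ↦ -1). -/
def toR (b : Bool) : ℝ := if b then 1 else -1

/-- The character χ_S(x) = ∏_{i∈S} x_i. -/
def chi {n : ℕ} (S : Finset (Fin n)) (x : Fin n → Bool) : ℝ := ∏ i ∈ S, toR (x i)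

/-- Fourier coefficient f̂_S = E[f(X) χ_S(X)]. -/
noncomputable def coeff {n : ℕ} (f : (Fin n → Bool) → ℝ) (S : Finset (Fin n)) : ℝ :=
  (∑ x : Fin n → Bool, f x * chi S x) / 2 ^ n

/-- Noise operator via the Fourier expansion: T_ρ f (y) = Σ_S ρ^{|S|} f̂_S y^S. -/
noncomputable def TF {n : ℕ} (ρ : ℝ) (f : (Fin n → Bool) → ℝ) (y : Fin n → Bool) : ℝ :=
  ∑ S : Finset (Fin n), ρ ^ S.card * coeff f S * chi S y

/-- f is ρ-self-predicting (w.r.t. the Fourier form of the noise operator). -/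
noncomputable def IsSP {n : ℕ} (ρ : ℝ) (f : (Fin n → Bool) → ℝ) : Prop :=
  ∀ y : Fin n → Bool, TF ρ f y ≠ 0 → Real.sign (TF ρ f y) = f y



lemma chi_full {n : ℕ} (A : Finset (Fin n)) (x : Fin n → Bool) :
    chi A x = ∏ i : Fin n, (if i ∈ A then toR (x i) else 1) := by
  rw [Finset.prod_ite_mem, Finset.univ_inter, chi]

lemma sum_prod_bool {n : ℕ} (F : Fin n → Bool → ℝ) :
    ∑ x : Fin n → Bool, ∏ i, F i (x i) = ∏ i, (F i true + F i false) := by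
  classical
  have h := Finset.prod_univ_sum (fun _ : Fin n => (Finset.univ : Finset Bool)) F
  rw [Fintype.piFinset_univ] at h
  rw [← h]
  exact Finset.prod_congr rfl fun i _ => by simp [Fintype.sum_bool]

lemma kernel {n : ℕ} (A B : Finset (Fin n)) :
    ∑ x : Fin n → Bool, chi A x * chi B x = if A = B then (2:ℝ)^n else 0 := by
  have h1 : ∀ x : Fin n → Bool, chi A x * chi B x
      = ∏ i, ((if i ∈ A then toR (x i) else 1) * (if i ∈ B then toR (x i) else 1)) := by
    intro x; rw [chi_full, chi_full, ← Finset.prod_mul_distrib]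
  simp only [h1]
  rw [sum_prod_bool (F := fun i b => (if i ∈ A then toR b else 1) * (if i ∈ B then toR b else 1))]
  by_cases h : A = B
  · subst h
    rw [if_pos rfl]
    have h2 : ∀ i : Fin n, ((if i ∈ A then toR true else 1) * (if i ∈ A then toR true else 1)
        + (if i ∈ A then toR false else 1) * (if i ∈ A then toR false else 1)) = 2 := by
      intro i; by_cases hi : i ∈ A <;> simp [hi, toR] <;> norm_num
    rw [Finset.prod_congr rfl fun i _ => h2 i, Finset.prod_const]
    simp
  · rw [if_neg h]
    have h3 : ∃ i, (i ∈ A ∧ i ∉ B) ∨ (i ∈ B ∧ i ∉ A) := by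
      by_contra hc
      push_neg at hc
      exact h (Finset.ext fun i => by have := hc i; tauto)
    obtain ⟨i, hi⟩ := h3
    apply Finset.prod_eq_zero (Finset.mem_univ i)
    rcases hi with ⟨ha, hb⟩ | ⟨ha, hb⟩ <;> simp [ha, hb, toR] <;> norm_num


lemma dual_kernel {m : ℕ} (x z : Fin m → Bool) :
    ∑ T : Finset (Fin m), chi T x * chi T z = if x = z then (2:ℝ)^m else 0 := by
  have h1 : ∀ T : Finset (Fin m), chi T x * chi T z = ∏ i ∈ T, (toR (x i) * toR (z i)) := by
    intro T; rw [chi, chi, Finset.prod_mul_distrib]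
  simp only [h1]
  have h2 : ∑ T : Finset (Fin m), ∏ i ∈ T, (toR (x i) * toR (z i))
      = ∏ i, (toR (x i) * toR (z i) + 1) := by
    rw [Finset.prod_add, ← Finset.powerset_univ]
    exact Finset.sum_congr rfl fun T _ => by simp
  rw [h2]
  by_cases h : x = z
  · subst h; rw [if_pos rfl]
    have h3 : ∀ i, toR (x i) * toR (x i) + 1 = 2 := fun i => by cases x i <;> norm_num [toR]
    rw [Finset.prod_congr rfl fun i _ => h3 i, Finset.prod_const]; simp
  · rw [if_neg h]
    obtain ⟨i, hi⟩ := Function.ne_iff.mp h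
    apply Finset.prod_eq_zero (Finset.mem_univ i)
    cases hx : x i <;> cases hz : z i <;> simp_all [toR] <;> norm_num

lemma inversion {m : ℕ} (f : (Fin m → Bool) → ℝ) (z : Fin m → Bool) :
    ∑ T : Finset (Fin m), coeff f T * chi T z = f z := by
  have key : ∀ T : Finset (Fin m), coeff f T * chi T z
      = (∑ x : Fin m → Bool, f x * (chi T x * chi T z)) / 2 ^ m := by
    intro T
    rw [coeff, div_mul_eq_mul_div, Finset.sum_mul]
    congr 1
    exact Finset.sum_congr rfl fun x _ => by ring
  simp only [key]
  rw [← Finset.sum_div, Finset.sum_comm]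
  have h4 : ∀ x : Fin m → Bool, ∑ T : Finset (Fin m), f x * (chi T x * chi T z)
      = f x * (if x = z then (2:ℝ)^m else 0) := by
    intro x; rw [← Finset.mul_sum, dual_kernel]
  simp only [h4, mul_ite, mul_zero]
  rw [Finset.sum_ite_eq' Finset.univ z (fun x => f x * 2 ^ m)]
  simp [mul_div_assoc]

lemma toR_parity {n : ℕ} (A : Finset (Fin n)) (y : Fin n → Bool) :
    toR (decide (Even ((A.filter (fun i => y i = false)).card))) = chi A y := by
  rw [chi, ← Finset.prod_filter_mul_prod_filter_not A (fun i => y i = false)]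
  have h1 : ∏ i ∈ A.filter (fun i => y i = false), toR (y i)
      = (-1 : ℝ) ^ (A.filter (fun i => y i = false)).card := by
    rw [Finset.prod_congr rfl (fun i hi => ?_), Finset.prod_const]
    rw [(Finset.mem_filter.mp hi).2]; rfl
  have h2 : ∏ i ∈ A.filter (fun i => ¬ y i = false), toR (y i) = 1 := by
    apply Finset.prod_eq_one
    intro i hi
    have h := (Finset.mem_filter.mp hi).2
    simp only [Bool.not_eq_false] at h
    rw [h]; rfl
  rw [h1, h2, mul_one]
  by_cases h : Even ((A.filter (fun i => y i = false)).card)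
  · simp [h, toR, h.neg_one_pow]
  · simp [h, toR, (Nat.not_even_iff_odd.mp h).neg_one_pow]

/-- If S_1,…,S_m ⊆ [n] are pairwise disjoint with |S_t| = w and
f : {-1,1}^m → {-1,1} is ρ^w-SP, then h(x) = f(x^{S_1},…,x^{S_m}) is ρ-SP.
The ±1 value x^{S_t} = ∏_{i∈S_t} x_i is encoded as the Boolean
"the number of -1 coordinates of x inside S_t is even". -/
theorem composition_with_disjoint_characters_sp {n m w : ℕ} (ρ : ℝ)
    (hρ0 : 0 ≤ ρ) (hρ1 : ρ ≤ 1)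
    (S : Fin m → Finset (Fin n))
    (hdisj : ∀ t t', t ≠ t' → Disjoint (S t) (S t'))
    (hcard : ∀ t, (S t).card = w)
    (f : (Fin m → Bool) → ℝ) (hf : ∀ x, f x = 1 ∨ f x = -1)
    (hSP : IsSP (ρ ^ w) f) :
    IsSP ρ (fun x : Fin n → Bool =>
      f (fun t => decide (Even (((S t).filter (fun i => x i = false)).card)))) := by
  classical
  set g : (Fin n → Bool) → (Fin m → Bool) :=
    fun x t => decide (Even (((S t).filter (fun i => x i = false)).card)) with hgdef
  set h : (Fin n → Bool) → ℝ := fun x => f (g x) with hhdef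
  -- composition of characters
  have hcomp : ∀ (T : Finset (Fin m)) (x : Fin n → Bool),
      chi T (g x) = chi (T.biUnion S) x := by
    intro T x
    rw [chi]
    have : ∀ t ∈ T, toR (g x t) = chi (S t) x := fun t _ => toR_parity (S t) x
    rw [Finset.prod_congr rfl this, chi,
      Finset.prod_biUnion (fun t _ t' _ htt' => hdisj t t' htt')]
    rfl
  -- Fourier coefficients of h
  have hcoeff : ∀ A : Finset (Fin n),
      coeff h A = ∑ T : Finset (Fin m), (if T.biUnion S = A then coeff f T else 0) := by
    intro A
    rw [coeff]
    have h1 : ∀ x : Fin n → Bool, h x * chi A x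
        = ∑ T : Finset (Fin m), coeff f T * (chi (T.biUnion S) x * chi A x) := by
      intro x
      rw [show h x = ∑ T : Finset (Fin m), coeff f T * chi T (g x) from
        (inversion f (g x)).symm]
      rw [Finset.sum_mul]
      exact Finset.sum_congr rfl fun T _ => by rw [hcomp]; ring
    simp only [h1]
    rw [Finset.sum_comm, Finset.sum_div]
    refine Finset.sum_congr rfl fun T _ => ?_
    rw [← Finset.mul_sum, kernel]
    by_cases hTA : T.biUnion S = A <;> simp [hTA]
  -- the key identity
  have hkey : ∀ y : Fin n → Bool, TF ρ h y = TF (ρ ^ w) f (g y) := by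
    intro y
    rw [TF, TF]
    simp only [hcoeff, Finset.mul_sum, Finset.sum_mul, mul_ite, mul_zero, ite_mul, zero_mul]
    rw [Finset.sum_comm]
    refine Finset.sum_congr rfl fun T _ => ?_
    rw [Finset.sum_ite_eq Finset.univ (T.biUnion S)
      (fun A => ρ ^ A.card * coeff f T * chi A y)]
    rw [if_pos (Finset.mem_univ _)]
    have hc : (T.biUnion S).card = T.card * w := by
      rw [Finset.card_biUnion (fun t _ t' _ htt' => hdisj t t' htt')]
      simp [hcard, mul_comm]
    rw [hc, pow_mul', hcomp]
  -- conclude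
  intro y hy
  have hy' : TF ρ h y ≠ 0 := hy
  rw [hkey y] at hy'
  show Real.sign (TF ρ h y) = h y
  rw [hkey y]
  exact hSP (g y) hy'
end

section
/- If a Boolean function f:{-1,1}^n→{-1,1} is strongly spectral threshold (i.e., f(x)=sgn f_Lev(x) and f_Lev(x)≠0 for all x, where f_Lev is the restriction of f's Fourier expansion to its minimal nonempty Fourier level), then there exists ρ*>0 such that f is ρ-SP for all ρ∈[0,ρ*). -/
/-- Weight of f at level j. -/
noncomputable def Wlevel {n : ℕ} (f : (Fin n → Bool) → ℝ) (j : ℕ) : ℝ :=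
  ∑ S ∈ Finset.univ.filter (fun S : Finset (Fin n) => S.card = j), (coeff f S) ^ 2

/-- Restriction of f's Fourier expansion to level k. -/
noncomputable def levPart {n : ℕ} (f : (Fin n → Bool) → ℝ) (k : ℕ) (x : Fin n → Bool) : ℝ :=
  ∑ S ∈ Finset.univ.filter (fun S : Finset (Fin n) => S.card = k), coeff f S * chi S x

lemma abs_chi {n : ℕ} (S : Finset (Fin n)) (y : Fin n → Bool) : |chi S y| = 1 := by
  rw [chi, Finset.abs_prod]
  apply Finset.prod_eq_one
  intro i _
  rcases (y i).eq_false_or_eq_true with h | h <;> simp [toR, h]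

/-- If f is strongly spectral threshold (f·f_Lev > 0 everywhere, k being
the minimal Fourier level with positive weight), then f is ρ-SP for all small enough ρ ≥ 0. -/
theorem sst_implies_lcsp {n : ℕ} (f : (Fin n → Bool) → ℝ) (hf : ∀ x, f x = 1 ∨ f x = -1)
    (k : ℕ) (hk : 0 < Wlevel f k) (hmin : ∀ j < k, Wlevel f j = 0)
    (hSST : ∀ x, 0 < f x * levPart f k x) :
    ∃ ρstar > (0 : ℝ), ∀ ρ : ℝ, 0 ≤ ρ → ρ < ρstar → IsSP ρ f := by
  classical
  -- coefficients below level k vanish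
  have hcoeff0 : ∀ S : Finset (Fin n), S.card < k → coeff f S = 0 := by
    intro S hS
    have hw : Wlevel f S.card = 0 := hmin _ hS
    rw [Wlevel] at hw
    have hmem : S ∈ Finset.univ.filter (fun T : Finset (Fin n) => T.card = S.card) := by
      simp
    have := (Finset.sum_eq_zero_iff_of_nonneg (fun T _ => sq_nonneg (coeff f T))).1 hw S hmem
    exact pow_eq_zero_iff (n := 2) (by norm_num) |>.1 this
  -- key decomposition
  set Tail : ℝ → (Fin n → Bool) → ℝ := fun ρ y =>
    ∑ S ∈ Finset.univ.filter (fun S : Finset (Fin n) => k < S.card),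
      ρ ^ (S.card - k) * coeff f S * chi S y with hTail
  have key : ∀ (ρ : ℝ) (y : Fin n → Bool),
      TF ρ f y = ρ ^ k * (levPart f k y + Tail ρ y) := by
    intro ρ y
    have hterm : ∀ S : Finset (Fin n),
        ρ ^ S.card * coeff f S * chi S y =
          (if S.card = k then ρ ^ k * (coeff f S * chi S y) else 0) +
          (if k < S.card then ρ ^ k * (ρ ^ (S.card - k) * coeff f S * chi S y) else 0) := by
      intro S
      rcases lt_trichotomy S.card k with h | h | h
      · simp [Nat.ne_of_lt h, not_lt.mpr h.le, hcoeff0 S h]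
      · simp [h]
        ring
      · have hpow : ρ ^ S.card = ρ ^ k * ρ ^ (S.card - k) := by
          rw [← pow_add, Nat.add_sub_cancel' h.le]
        simp only [if_neg (Nat.ne_of_gt h), if_pos h, hpow]
        ring
    rw [TF]
    calc ∑ S : Finset (Fin n), ρ ^ S.card * coeff f S * chi S y
        = ∑ S : Finset (Fin n),
            ((if S.card = k then ρ ^ k * (coeff f S * chi S y) else 0) +
             (if k < S.card then ρ ^ k * (ρ ^ (S.card - k) * coeff f S * chi S y) else 0)) := by
          exact Finset.sum_congr rfl (fun S _ => hterm S)
      _ = ρ ^ k * (levPart f k y + Tail ρ y) := by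
          rw [Finset.sum_add_distrib, ← Finset.sum_filter, ← Finset.sum_filter,
            levPart, hTail, ← Finset.mul_sum, ← Finset.mul_sum, mul_add]
  -- ε : minimum of |levPart|
  have hne : (Finset.univ : Finset (Fin n → Bool)).Nonempty := Finset.univ_nonempty
  set ε : ℝ := Finset.univ.inf' hne (fun y => |levPart f k y|) with hε
  have hεle : ∀ y : Fin n → Bool, ε ≤ |levPart f k y| := fun y =>
    Finset.inf'_le _ (Finset.mem_univ y)
  have hεpos : 0 < ε := by
    rw [hε, Finset.lt_inf'_iff]
    intro y _
    rw [abs_pos]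
    intro h0
    have := hSST y
    rw [h0, mul_zero] at this
    exact lt_irrefl 0 this
  -- C : sum of |coeff|
  set C : ℝ := ∑ S : Finset (Fin n), |coeff f S| with hC
  have hCnn : 0 ≤ C := Finset.sum_nonneg fun S _ => abs_nonneg _
  refine ⟨min 1 (ε / (C + 1)), lt_min one_pos (div_pos hεpos (by linarith)), ?_⟩
  intro ρ hρ0 hρlt y hTF
  have hρ1 : ρ ≤ 1 := le_of_lt (lt_of_lt_of_le hρlt (min_le_left _ _))
  have hρε : ρ * (C + 1) < ε := by
    have h2 : ρ < ε / (C + 1) := lt_of_lt_of_le hρlt (min_le_right _ _)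
    have h3 : 0 < C + 1 := by linarith
    calc ρ * (C + 1) < (ε / (C + 1)) * (C + 1) := by
          exact mul_lt_mul_of_pos_right h2 h3
      _ = ε := div_mul_cancel₀ _ (ne_of_gt h3)
  -- tail bound
  have htail : |Tail ρ y| ≤ ρ * C := by
    calc |Tail ρ y| ≤ ∑ S ∈ Finset.univ.filter (fun S : Finset (Fin n) => k < S.card),
          |ρ ^ (S.card - k) * coeff f S * chi S y| := Finset.abs_sum_le_sum_abs _ _
      _ ≤ ∑ S ∈ Finset.univ.filter (fun S : Finset (Fin n) => k < S.card),
          ρ * |coeff f S| := by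
          apply Finset.sum_le_sum
          intro S hS
          have hSk : k < S.card := (Finset.mem_filter.1 hS).2
          rw [abs_mul, abs_mul, abs_chi, mul_one, abs_pow, abs_of_nonneg hρ0]
          apply mul_le_mul_of_nonneg_right _ (abs_nonneg _)
          calc ρ ^ (S.card - k) ≤ ρ ^ 1 :=
                pow_le_pow_of_le_one hρ0 hρ1 (Nat.one_le_iff_ne_zero.mpr
                  (Nat.sub_ne_zero_of_lt hSk))
            _ = ρ := pow_one ρ
      _ ≤ ∑ S : Finset (Fin n), ρ * |coeff f S| := by
          apply Finset.sum_le_sum_of_subset_of_nonneg (Finset.filter_subset _ _)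
          intro S _ _
          exact mul_nonneg hρ0 (abs_nonneg _)
      _ = ρ * C := by rw [hC, Finset.mul_sum]
  have htail' : |Tail ρ y| < ε := by
    have : ρ * C ≤ ρ * (C + 1) := by nlinarith
    linarith
  -- ρ^k > 0 (since TF ≠ 0)
  have hρk : 0 < ρ ^ k := by
    rcases lt_or_eq_of_le (pow_nonneg hρ0 k) with h | h
    · exact h
    · exfalso; apply hTF; rw [key, ← h, zero_mul]
  have hεy := hεle y
  rw [key]
  rcases hf y with hfy | hfy
  · have hlp : 0 < levPart f k y := by
      have := hSST y; rw [hfy, one_mul] at this; exact this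
    have habs : |levPart f k y| = levPart f k y := abs_of_pos hlp
    have hpos : 0 < levPart f k y + Tail ρ y := by
      have := abs_lt.1 htail'
      rw [habs] at hεy
      linarith [this.1]
    rw [hfy]
    exact Real.sign_of_pos (mul_pos hρk hpos)
  · have hlp : levPart f k y < 0 := by
      have h1 := hSST y
      rw [hfy] at h1
      nlinarith
    have habs : |levPart f k y| = -levPart f k y := abs_of_neg hlp
    have hneg : levPart f k y + Tail ρ y < 0 := by
      have := abs_lt.1 htail'
      rw [habs] at hεy
      linarith [this.2]
    rw [hfy]
    exact Real.sign_of_neg (mul_neg_of_pos_of_neg hρk hneg)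
end

section
/- If a Boolean function f:{-1,1}^n→{-1,1} is LCSP (ρ-SP for all ρ in some interval [0,ρ*) with ρ*>0), then f is weakly spectral threshold: f_Lev(x)·f(x) ≥ 0 for all x∈{-1,1}^n. -/
/-- If f is LCSP (ρ-SP for all ρ ∈ [0,ρ*) for some ρ* > 0), then f is
weakly spectral threshold: f·f_Lev ≥ 0 everywhere, where k is the minimal nonzero level. -/
theorem lcsp_implies_wst {n : ℕ} (f : (Fin n → Bool) → ℝ) (hf : ∀ x, f x = 1 ∨ f x = -1)
    (ρstar : ℝ) (hρstar : 0 < ρstar)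
    (hLCSP : ∀ ρ : ℝ, 0 ≤ ρ → ρ < ρstar → IsSP ρ f)
    (k : ℕ) (hk : 0 < Wlevel f k) (hmin : ∀ j < k, Wlevel f j = 0) :
    ∀ x, 0 ≤ f x * levPart f k x := by
  intro x
  have hcz : ∀ S : Finset (Fin n), S.card < k → coeff f S = 0 := by
    intro S hS
    have h0 := hmin S.card hS
    rw [Wlevel] at h0
    have hmem : S ∈ Finset.univ.filter (fun T : Finset (Fin n) => T.card = S.card) := by
      simp
    have := (Finset.sum_eq_zero_iff_of_nonneg (fun T _ => sq_nonneg (coeff f T))).mp h0 S hmem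
    exact pow_eq_zero_iff (two_ne_zero) |>.mp this
  set L := levPart f k x with hL
  rcases eq_or_ne L 0 with h0 | h0
  · rw [h0]; simp
  set Q : ℝ → ℝ := fun ρ => ∑ S : Finset (Fin n), ρ ^ (S.card - k) * coeff f S * chi S x with hQ
  have hQ0 : Q 0 = L := by
    rw [hQ, hL, levPart, Finset.sum_filter]
    apply Finset.sum_congr rfl
    intro S _
    rcases lt_trichotomy S.card k with h | h | h
    · simp [hcz S h, h.ne]
    · simp [h]
    · have : S.card - k ≠ 0 := Nat.sub_ne_zero_of_lt h
      simp [this, h.ne']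
  have hTF : ∀ ρ : ℝ, TF ρ f x = ρ ^ k * Q ρ := by
    intro ρ
    rw [TF, hQ, Finset.mul_sum]
    apply Finset.sum_congr rfl
    intro S _
    rcases lt_or_ge S.card k with h | h
    · simp [hcz S h]
    · rw [← mul_assoc, ← mul_assoc, ← pow_add, Nat.add_sub_cancel' h]
  have hQc : Continuous Q := by
    rw [hQ]
    exact continuous_finset_sum _ fun S _ =>
      ((continuous_pow _).mul continuous_const).mul continuous_const
  have hε : 0 < |L| := abs_pos.mpr h0
  obtain ⟨δ, hδpos, hδ⟩ := Metric.continuousAt_iff.mp hQc.continuousAt |L| hε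
  set ρ := min (ρstar / 2) (δ / 2) with hρ
  have hρpos : 0 < ρ := lt_min (by linarith) (by linarith)
  have hρlt : ρ < ρstar := lt_of_le_of_lt (min_le_left _ _) (by linarith)
  have hρδ : dist ρ 0 < δ := by
    rw [Real.dist_eq, sub_zero, abs_of_pos hρpos]
    exact lt_of_le_of_lt (min_le_right _ _) (by linarith)
  have hclose : |Q ρ - L| < |L| := by
    have := hδ hρδ
    rwa [Real.dist_eq, hQ0] at this
  have hρk : 0 < ρ ^ k := pow_pos hρpos k
  have hsp := hLCSP ρ hρpos.le hρlt x
  rcases lt_or_gt_of_ne h0 with hLneg | hLpos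
  · -- L < 0
    have hQρ : Q ρ < 0 := by
      have h1 := abs_lt.mp hclose
      have h2 : |L| = -L := abs_of_neg hLneg
      linarith [h1.2, h2 ▸ h1.2]
    have hTFneg : TF ρ f x < 0 := by rw [hTF ρ]; exact mul_neg_of_pos_of_neg hρk hQρ
    have := hsp hTFneg.ne
    rw [Real.sign_of_neg hTFneg] at this
    rw [← this]
    nlinarith
  · -- L > 0
    have hQρ : 0 < Q ρ := by
      have h1 := abs_lt.mp hclose
      have h2 : |L| = L := abs_of_pos hLpos
      linarith [h1.1]
    have hTFpos : 0 < TF ρ f x := by rw [hTF ρ]; exact mul_pos hρk hQρ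
    have := hsp hTFpos.ne'
    rw [Real.sign_of_pos hTFpos] at this
    rw [← this]
    linarith
end

section
/- Any LCSP Boolean function f:{-1,1}^n→{-1,1} is either balanced (E[f]=0) or constant. -/
/-- Any LCSP Boolean function is either balanced (E[f] = 0) or constant. -/
theorem lcsp_balanced_or_constant {n : ℕ} (f : (Fin n → Bool) → ℝ)
    (hf : ∀ x, f x = 1 ∨ f x = -1)
    (ρstar : ℝ) (hρstar : 0 < ρstar)
    (hLCSP : ∀ ρ : ℝ, 0 ≤ ρ → ρ < ρstar → IsSP ρ f) :
    (∑ x : Fin n → Bool, f x = 0) ∨ (∃ c : ℝ, ∀ x, f x = c) := by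
  have hTF0 : ∀ y : Fin n → Bool, TF 0 f y = coeff f ∅ := by
    intro y
    unfold TF
    rw [Finset.sum_eq_single (∅ : Finset (Fin n))]
    · simp [chi]
    · intro S _ hS
      have : S.card ≠ 0 := by simpa [Finset.card_eq_zero] using hS
      simp [zero_pow this]
    · simp
  by_cases hc : coeff f ∅ = 0
  · left
    have : (∑ x : Fin n → Bool, f x * chi ∅ x) / 2 ^ n = 0 := hc
    have h2 : (2:ℝ) ^ n ≠ 0 := by positivity
    have := (div_eq_zero_iff.mp this).resolve_right h2
    simpa [chi] using this
  · right
    refine ⟨Real.sign (coeff f ∅), fun x => ?_⟩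
    have := hLCSP 0 le_rfl hρstar x
    rw [hTF0 x] at this
    exact (this hc).symm
end
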